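/- Let n ≥ 1 and 0 ≤ M ≤ n be integers, let t > 0, let f : ℝ → [0,∞) be Lebesgue integrable with ‖f‖₁ := ∫_ℝ f(s) ds, and let p : {0,1,…,M+1} → {0,1,…,n+1} be injective. Then, with the convention z₀ := 0, ∫_{[0,t]^{n+1}} ∏_{l=0}^{M} f(z_{p(l)} − z_{p(l+1)}) dz₁⋯dz_{n+1} ≤ ‖f‖₁^{M+1} · t^{n−M}. In particular, since Δ^{n+1}(t) ⊂ [0,t]^{n+1}, the same bound holds for the integral over the simplex Δ^{n+1}(t); taking M = [(n+1)/2] (integer part) yields the bound ‖f‖₁^{[(n+1)/2]+1} t^{[n/2]}. -/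

import Mathlib

open MeasureTheory

/-- The simplex `Δ^N(t) = {z ∈ ℝ^N : 0 ≤ z₁ ≤ ⋯ ≤ z_N ≤ t}`. -/
def simplex (N : ℕ) (t : ℝ) : Set (Fin N → ℝ) :=
  {z | Monotone z ∧ ∀ i, z i ∈ Set.Icc (0 : ℝ) t}

/-- Extension of `z` by the convention `z₀ := 0`: `zc z j = z_j` for `1 ≤ j ≤ N`. -/
def zc {N : ℕ} (z : Fin N → ℝ) (j : ℕ) : ℝ :=
  if hj : 1 ≤ j ∧ j ≤ N then z ⟨j - 1, by omega⟩ else 0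

section Aux

open ENNReal

/-- Non-dependent version of `Fin.insertNth` for real tuples. -/
def ins {n : ℕ} (j : Fin (n + 1)) (x : ℝ) (y : Fin n → ℝ) : Fin (n + 1) → ℝ :=
  Fin.insertNth j x y

lemma ins_symm_eq {n : ℕ} (j : Fin (n + 1)) (x : ℝ) (y : Fin n → ℝ) :
    (MeasurableEquiv.piFinSuccAbove (fun _ : Fin (n + 1) => ℝ) j).symm (x, y) = ins j x y := rfl

lemma measurable_ins_x {n : ℕ} (j : Fin (n + 1)) (y : Fin n → ℝ) :
    Measurable fun x : ℝ => ins j x y :=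
  ((MeasurableEquiv.piFinSuccAbove (fun _ : Fin (n + 1) => ℝ) j).symm.measurable).comp
    (measurable_id.prodMk measurable_const)

lemma measurable_zc {N : ℕ} (m : ℕ) : Measurable fun z : Fin N → ℝ => zc z m := by
  by_cases h : 1 ≤ m ∧ m ≤ N
  · simp only [zc, dif_pos h]; exact measurable_pi_apply _
  · simp only [zc, dif_neg h]; exact measurable_const

lemma ins_apply_ne {n : ℕ} (j : Fin (n + 1)) (x x' : ℝ) (y : Fin n → ℝ)
    {i : Fin (n + 1)} (h : i ≠ j) :
    ins j x y i = ins j x' y i := by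
  obtain ⟨k, rfl⟩ := Fin.exists_succAbove_eq h
  rw [show ins j x y (j.succAbove k) = y k from
      Fin.insertNth_apply_succAbove (α := fun _ => ℝ) j x y k,
    show ins j x' y (j.succAbove k) = y k from
      Fin.insertNth_apply_succAbove (α := fun _ => ℝ) j x' y k]

lemma zc_ins_ne {n : ℕ} (j : Fin (n + 1)) (x x' : ℝ) (y : Fin n → ℝ)
    {m : ℕ} (hm : m ≠ (j : ℕ) + 1) :
    zc (ins j x y) m = zc (ins j x' y) m := by
  by_cases h : 1 ≤ m ∧ m ≤ n + 1
  · simp only [zc, dif_pos h]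
    refine ins_apply_ne j x x' y ?_
    intro he
    apply hm
    have := congrArg Fin.val he
    simp only at this
    omega
  · simp only [zc, dif_neg h]

lemma zc_ins_self {n : ℕ} (j : Fin (n + 1)) (x : ℝ) (y : Fin n → ℝ) :
    zc (ins j x y) ((j : ℕ) + 1) = x := by
  have h : 1 ≤ (j : ℕ) + 1 ∧ (j : ℕ) + 1 ≤ n + 1 := ⟨by omega, by omega⟩
  simp only [zc, dif_pos h]
  have e : (⟨(j : ℕ) + 1 - 1, by omega⟩ : Fin (n + 1)) = j := by
    apply Fin.ext; simp
  rw [e]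
  exact Fin.insertNth_apply_same (α := fun _ => ℝ) j x y

lemma lint_shift_le {t : ℝ} (φ : ℝ → ℝ≥0∞) (c : ℝ) :
    ∫⁻ x, φ (x - c) ∂(volume.restrict (Set.Icc (0:ℝ) t)) ≤ ∫⁻ s, φ s := by
  refine le_trans (lintegral_mono' Measure.restrict_le_self le_rfl) ?_
  exact le_of_eq (lintegral_sub_right_eq_self φ c)

lemma lint_reflect_le {t : ℝ} (φ : ℝ → ℝ≥0∞) (hφ : Measurable φ) (c : ℝ) :
    ∫⁻ x, φ (c - x) ∂(volume.restrict (Set.Icc (0:ℝ) t)) ≤ ∫⁻ s, φ s := by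
  refine le_trans (lintegral_mono' Measure.restrict_le_self le_rfl) ?_
  exact le_of_eq ((Measure.measurePreserving_sub_left volume c).lintegral_comp hφ)

/-- Fubini for peeling off one coordinate of the cube measure. -/
lemma lintegral_pi_eq {n : ℕ} (ν : Measure ℝ) [SigmaFinite ν] (j : Fin (n + 1))
    (F : (Fin (n + 1) → ℝ) → ℝ≥0∞) (hF : Measurable F) :
    ∫⁻ z, F z ∂(Measure.pi fun _ : Fin (n + 1) => ν)
      = ∫⁻ y, ∫⁻ x, F (ins j x y) ∂ν ∂(Measure.pi fun _ : Fin n => ν) := by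
  have mp := measurePreserving_piFinSuccAbove (fun _ : Fin (n + 1) => ν) j
  have mps := mp.symm (MeasurableEquiv.piFinSuccAbove (fun _ : Fin (n + 1) => ℝ) j)
  rw [← mps.lintegral_comp hF]
  exact lintegral_prod_symm
    (fun a => F ((MeasurableEquiv.piFinSuccAbove (fun _ : Fin (n + 1) => ℝ) j).symm a))
    ((hF.comp
      (MeasurableEquiv.piFinSuccAbove (fun _ : Fin (n + 1) => ℝ) j).symm.measurable).aemeasurable)

/-- The "peel one coordinate" estimate. -/
lemma peel {n : ℕ} {t : ℝ} (j : Fin (n + 1))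
    (G K : (Fin (n + 1) → ℝ) → ℝ≥0∞) (hG : Measurable G) (hK : Measurable K)
    (A : ℝ≥0∞)
    (hGind : ∀ (x : ℝ) (y : Fin n → ℝ), G (ins j x y) = G (ins j 0 y))
    (hKb : ∀ y : Fin n → ℝ,
      ∫⁻ x, K (ins j x y) ∂(volume.restrict (Set.Icc (0:ℝ) t)) ≤ A) :
    ENNReal.ofReal t *
        ∫⁻ z, G z * K z ∂(Measure.pi fun _ : Fin (n + 1) => volume.restrict (Set.Icc (0:ℝ) t))
      ≤ A * ∫⁻ z, G z ∂(Measure.pi fun _ : Fin (n + 1) => volume.restrict (Set.Icc (0:ℝ) t)) := by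
  set ν : Measure ℝ := volume.restrict (Set.Icc (0:ℝ) t) with hν
  set π : Measure (Fin n → ℝ) := Measure.pi fun _ : Fin n => ν with hπ
  have hνuniv : ν Set.univ = ENNReal.ofReal t := by
    simp [hν, Real.volume_Icc]
  have hG0 : Measurable fun y : Fin n → ℝ => G (ins j 0 y) :=
    hG.comp (((MeasurableEquiv.piFinSuccAbove (fun _ : Fin (n + 1) => ℝ) j).symm.measurable).comp
      (measurable_const.prodMk measurable_id))
  calc ENNReal.ofReal t * ∫⁻ z, G z * K z ∂(Measure.pi fun _ : Fin (n + 1) => ν)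
      = ENNReal.ofReal t * ∫⁻ y, ∫⁻ x, G (ins j x y) * K (ins j x y) ∂ν ∂π := by
        rw [lintegral_pi_eq ν j (fun z => G z * K z) (hG.mul hK)]
    _ ≤ ENNReal.ofReal t * ∫⁻ y, G (ins j 0 y) * A ∂π := by
        refine mul_le_mul_right (lintegral_mono fun y => ?_) _
        calc ∫⁻ x, G (ins j x y) * K (ins j x y) ∂ν
            = ∫⁻ x, G (ins j 0 y) * K (ins j x y) ∂ν :=
              lintegral_congr fun x => by rw [hGind]
          _ = G (ins j 0 y) * ∫⁻ x, K (ins j x y) ∂ν :=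
              lintegral_const_mul _ (hK.comp (measurable_ins_x j y))
          _ ≤ G (ins j 0 y) * A := mul_le_mul_right (hKb y) _
    _ = A * ∫⁻ y, G (ins j 0 y) * ENNReal.ofReal t ∂π := by
        rw [lintegral_mul_const'' _ hG0.aemeasurable, lintegral_mul_const'' _ hG0.aemeasurable]
        ring
    _ = A * ∫⁻ y, ∫⁻ _x, G (ins j 0 y) ∂ν ∂π := by
        congr 1
        refine lintegral_congr fun y => ?_
        rw [lintegral_const, hνuniv]
    _ = A * ∫⁻ y, ∫⁻ x, G (ins j x y) ∂ν ∂π := by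
        congr 1
        exact lintegral_congr fun y => lintegral_congr fun x => (hGind x y).symm
    _ = A * ∫⁻ z, G z ∂(Measure.pi fun _ : Fin (n + 1) => ν) := by
        rw [lintegral_pi_eq ν j _ hG]

lemma key_lintegral {n : ℕ} {t : ℝ} (ht : 0 < t) (φ : ℝ → ℝ≥0∞) (hφ : Measurable φ) :
    ∀ M, M ≤ n → ∀ q : Fin (M + 2) → ℕ, Function.Injective q → (∀ l, q l ≤ n + 1) →
    ∫⁻ z, ∏ l : Fin (M + 1), φ (zc z (q l.castSucc) - zc z (q l.succ))
        ∂(Measure.pi fun _ : Fin (n + 1) => volume.restrict (Set.Icc (0:ℝ) t))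
      ≤ (∫⁻ s, φ s) ^ (M + 1) * (ENNReal.ofReal t) ^ (n - M) := by
  have hT0 : ENNReal.ofReal t ≠ 0 := (ENNReal.ofReal_pos.mpr ht).ne'
  have hTtop : ENNReal.ofReal t ≠ ⊤ := ofReal_ne_top
  set ν : Measure ℝ := volume.restrict (Set.Icc (0:ℝ) t) with hν
  set A : ℝ≥0∞ := ∫⁻ s, φ s with hA
  have hKmeas : ∀ a b : ℕ, Measurable fun z : Fin (n + 1) → ℝ => φ (zc z a - zc z b) :=
    fun a b => hφ.comp ((measurable_zc a).sub (measurable_zc b))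
  intro M
  induction M with
  | zero =>
    intro _ q hq hqle
    have hne : q 0 ≠ q 1 := fun h => absurd (hq h) (by decide)
    simp only [Nat.sub_zero, zero_add, pow_one]
    have hprod : ∀ z : Fin (n + 1) → ℝ,
        (∏ l : Fin 1, φ (zc z (q l.castSucc) - zc z (q l.succ)))
          = φ (zc z (q 0) - zc z (q 1)) := by
      intro z; simp [Fin.prod_univ_one]
    rw [lintegral_congr hprod]
    set K : (Fin (n + 1) → ℝ) → ℝ≥0∞ := fun z => φ (zc z (q 0) - zc z (q 1)) with hK
    have main : ∀ j : Fin (n + 1),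
        (∀ y : Fin n → ℝ, ∫⁻ x, K (ins j x y) ∂ν ≤ A) →
        ∫⁻ z, K z ∂(Measure.pi fun _ : Fin (n + 1) => ν) ≤ A * ENNReal.ofReal t ^ n := by
      intro j hKb
      have hp := peel j (fun _ => 1) K measurable_const (hKmeas _ _) A (fun _ _ => rfl) hKb
      simp only [one_mul, lintegral_const, Measure.pi_univ] at hp
      have hν1 : ν Set.univ = ENNReal.ofReal t := by simp [hν, Real.volume_Icc]
      rw [hν1] at hp
      have hp2 : ENNReal.ofReal t * ∫⁻ z, K z ∂(Measure.pi fun _ : Fin (n + 1) => ν)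
          ≤ ENNReal.ofReal t * (A * ENNReal.ofReal t ^ n) := by
        refine hp.trans (le_of_eq ?_)
        simp only [Finset.prod_const, Finset.card_univ, Fintype.card_fin]
        rw [pow_succ]
        ring
      exact (ENNReal.mul_le_mul_iff_right hT0 hTtop).mp hp2
    by_cases h0 : q 0 = 0
    · have h1 : q 1 ≠ 0 := fun h => hne (by rw [h0, h])
      set j : Fin (n + 1) := ⟨q 1 - 1, by have := hqle 1; omega⟩ with hjd
      refine main j fun y => ?_
      have hj1 : (j : ℕ) + 1 = q 1 := by show q 1 - 1 + 1 = q 1; omega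
      have he : ∀ x : ℝ, K (ins j x y) = φ ((0 : ℝ) - x) := by
        intro x
        have e1 : zc (ins j x y) (q 1) = x := by rw [← hj1]; exact zc_ins_self _ _ _
        have e0 : zc (ins j x y) (q 0) = 0 := by rw [h0]; simp [zc]
        simp only [hK, e1, e0]
      simp_rw [he]
      exact lint_reflect_le φ hφ 0
    · set j : Fin (n + 1) := ⟨q 0 - 1, by have := hqle 0; omega⟩ with hjd
      refine main j fun y => ?_
      have hj1 : (j : ℕ) + 1 = q 0 := by show q 0 - 1 + 1 = q 0; omega
      have he : ∀ x : ℝ, K (ins j x y) = φ (x - zc (ins j 0 y) (q 1)) := by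
        intro x
        have e0 : zc (ins j x y) (q 0) = x := by rw [← hj1]; exact zc_ins_self _ _ _
        have e1 : zc (ins j x y) (q 1) = zc (ins j 0 y) (q 1) :=
          zc_ins_ne j x 0 y (by rw [hj1]; exact hne.symm)
        simp only [hK, e0, e1]
      simp_rw [he]
      exact lint_shift_le φ _
  | succ M ih =>
    intro hM1 q hq hqle
    have hMn : M ≤ n := by omega
    have hvals : ∀ a b : Fin (M + 3), a ≠ b → q a ≠ q b := fun a b hab h => hab (hq h)
    have conclude : ∀ (G K : (Fin (n + 1) → ℝ) → ℝ≥0∞),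
        (∀ z, (∏ l : Fin (M + 2), φ (zc z (q l.castSucc) - zc z (q l.succ))) = G z * K z) →
        Measurable G → Measurable K →
        (∃ j : Fin (n + 1),
          (∀ (x : ℝ) (y : Fin n → ℝ), G (ins j x y) = G (ins j 0 y)) ∧
          (∀ y : Fin n → ℝ, ∫⁻ x, K (ins j x y) ∂ν ≤ A)) →
        (∫⁻ z, G z ∂(Measure.pi fun _ : Fin (n + 1) => ν)
            ≤ A ^ (M + 1) * ENNReal.ofReal t ^ (n - M)) →
        ∫⁻ z, ∏ l : Fin (M + 2), φ (zc z (q l.castSucc) - zc z (q l.succ))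
            ∂(Measure.pi fun _ : Fin (n + 1) => ν)
          ≤ A ^ (M + 2) * ENNReal.ofReal t ^ (n - (M + 1)) := by
      rintro G K hGK hGm hKm ⟨j, hGind, hKb⟩ hGle
      rw [lintegral_congr hGK]
      refine (ENNReal.mul_le_mul_iff_right hT0 hTtop).mp ?_
      refine (peel j G K hGm hKm A hGind hKb).trans ?_
      calc A * ∫⁻ z, G z ∂(Measure.pi fun _ : Fin (n + 1) => ν)
          ≤ A * (A ^ (M + 1) * ENNReal.ofReal t ^ (n - M)) := mul_le_mul_right hGle _
        _ = ENNReal.ofReal t * (A ^ (M + 2) * ENNReal.ofReal t ^ (n - (M + 1))) := by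
            have h1 : (n - M) = (n - (M + 1)) + 1 := by omega
            rw [h1, pow_succ, pow_succ]
            ring
    by_cases h0 : q 0 = 0
    · -- peel the last coordinate
      have hlast : q (Fin.last (M + 2)) ≠ 0 := by
        intro h
        exact absurd (hq (h0.trans h.symm)) (by simp [Fin.ext_iff])
      set j : Fin (n + 1) := ⟨q (Fin.last (M + 2)) - 1, by have := hqle (Fin.last (M + 2)); omega⟩
        with hjd
      have hj1 : (j : ℕ) + 1 = q (Fin.last (M + 2)) := by
        show q (Fin.last (M + 2)) - 1 + 1 = q (Fin.last (M + 2)); omega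
      set q'' : Fin (M + 2) → ℕ := fun l => q l.castSucc with hq''
      set G : (Fin (n + 1) → ℝ) → ℝ≥0∞ :=
        fun z => ∏ l : Fin (M + 1), φ (zc z (q'' l.castSucc) - zc z (q'' l.succ)) with hG
      set K : (Fin (n + 1) → ℝ) → ℝ≥0∞ :=
        fun z => φ (zc z (q (Fin.last (M + 1)).castSucc) - zc z (q (Fin.last (M + 2)))) with hK
      refine conclude G K ?_ (Finset.measurable_prod _ fun l _ => hKmeas _ _) (hKmeas _ _)
        ⟨j, ?_, ?_⟩ (ih hMn q'' (hq.comp (Fin.castSucc_injective _)) fun l => hqle _)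
      · intro z
        rw [Fin.prod_univ_castSucc]
        rfl
      · intro x y
        simp only [hG]
        refine Finset.prod_congr rfl fun l _ => ?_
        have h1 : q'' l.castSucc ≠ (j : ℕ) + 1 := by
          rw [hj1]; exact hvals _ _ (Fin.castSucc_lt_last _).ne
        have h2 : q'' l.succ ≠ (j : ℕ) + 1 := by
          rw [hj1]; exact hvals _ _ (Fin.castSucc_lt_last _).ne
        rw [zc_ins_ne j x 0 y h1, zc_ins_ne j x 0 y h2]
      · intro y
        have he : ∀ x : ℝ, K (ins j x y)
            = φ (zc (ins j 0 y) (q (Fin.last (M + 1)).castSucc) - x) := by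
          intro x
          have e1 : zc (ins j x y) (q (Fin.last (M + 2))) = x := by
            rw [← hj1]; exact zc_ins_self _ _ _
          have e2 : zc (ins j x y) (q (Fin.last (M + 1)).castSucc)
              = zc (ins j 0 y) (q (Fin.last (M + 1)).castSucc) :=
            zc_ins_ne j x 0 y (by rw [hj1]; exact hvals _ _ (Fin.castSucc_lt_last _).ne)
          simp only [hK, e1, e2]
        simp_rw [he]
        exact lint_reflect_le φ hφ _
    · -- peel the first coordinate
      set j : Fin (n + 1) := ⟨q 0 - 1, by have := hqle 0; omega⟩ with hjd
      have hj1 : (j : ℕ) + 1 = q 0 := by show q 0 - 1 + 1 = q 0; omega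
      set q' : Fin (M + 2) → ℕ := fun l => q l.succ with hq'
      set G : (Fin (n + 1) → ℝ) → ℝ≥0∞ :=
        fun z => ∏ l : Fin (M + 1), φ (zc z (q' l.castSucc) - zc z (q' l.succ)) with hG
      set K : (Fin (n + 1) → ℝ) → ℝ≥0∞ :=
        fun z => φ (zc z (q 0) - zc z (q 1)) with hK
      refine conclude G K ?_ (Finset.measurable_prod _ fun l _ => hKmeas _ _) (hKmeas _ _)
        ⟨j, ?_, ?_⟩ (ih hMn q' (hq.comp (Fin.succ_injective _)) fun l => hqle _)
      · intro z
        rw [Fin.prod_univ_succ, mul_comm]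
        rfl
      · intro x y
        simp only [hG]
        refine Finset.prod_congr rfl fun l _ => ?_
        have h1 : q' l.castSucc ≠ (j : ℕ) + 1 := by
          rw [hj1]; exact hvals _ _ (Fin.succ_ne_zero _)
        have h2 : q' l.succ ≠ (j : ℕ) + 1 := by
          rw [hj1]; exact hvals _ _ (Fin.succ_ne_zero _)
        rw [zc_ins_ne j x 0 y h1, zc_ins_ne j x 0 y h2]
      · intro y
        have he : ∀ x : ℝ, K (ins j x y) = φ (x - zc (ins j 0 y) (q 1)) := by
          intro x
          have e0 : zc (ins j x y) (q 0) = x := by rw [← hj1]; exact zc_ins_self _ _ _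
          have e1 : zc (ins j x y) (q 1) = zc (ins j 0 y) (q 1) :=
            zc_ins_ne j x 0 y (by rw [hj1]; exact hvals _ _ (by simp [Fin.ext_iff]))
          simp only [hK, e0, e1]
        simp_rw [he]
        exact lint_shift_le φ _

lemma restrict_cube (n : ℕ) (t : ℝ) :
    Measure.pi (fun _ : Fin (n + 1) => (volume : Measure ℝ).restrict (Set.Icc (0:ℝ) t))
      = (volume : Measure (Fin (n + 1) → ℝ)).restrict
          (Set.univ.pi fun _ => Set.Icc (0:ℝ) t) := by
  refine Measure.pi_eq fun s hs => ?_
  rw [Measure.restrict_apply (MeasurableSet.univ_pi hs), ← Set.pi_inter_distrib,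
    volume_pi_pi]
  refine Finset.prod_congr rfl fun i _ => ?_
  rw [Measure.restrict_apply (hs i)]

lemma integral_le_of_lintegral_le {α : Type*} [MeasurableSpace α] (μ : Measure α)
    (F : α → ℝ) (hF0 : ∀ z, 0 ≤ F z) (φB : α → ℝ≥0∞)
    (hle : ∀ z, ENNReal.ofReal (F z) ≤ φB z) (B : ℝ≥0∞)
    (hB : ∫⁻ z, φB z ∂μ ≤ B) (hBtop : B ≠ ⊤) :
    ∫ z, F z ∂μ ≤ B.toReal := by
  by_cases hm : AEStronglyMeasurable F μ
  · rw [integral_eq_lintegral_of_nonneg_ae (Filter.Eventually.of_forall hF0) hm]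
    exact ENNReal.toReal_mono hBtop (le_trans (lintegral_mono fun z => hle z) hB)
  · rw [integral_non_aestronglyMeasurable hm]
    exact ENNReal.toReal_nonneg

end Aux

/-- Key integral estimate underlying Proposition 5.2: for `n ≥ 1`, `0 ≤ M ≤ n`, `t > 0`,
a nonnegative integrable `f`, and an injective `p : {0,…,M+1} → {0,…,n+1}`, with `z₀ := 0`,
`∫_{[0,t]^{n+1}} ∏_{l=0}^{M} f(z_{p(l)} − z_{p(l+1)}) dz ≤ ‖f‖₁^{M+1} t^{n−M}`; in particular
the same bound holds for the integral over the simplex `Δ^{n+1}(t) ⊂ [0,t]^{n+1}`. -/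
theorem cube_integral_prod_le (n M : ℕ) (hn : 1 ≤ n) (hM : M ≤ n)
    (t : ℝ) (ht : 0 < t)
    (f : ℝ → ℝ) (hf0 : ∀ s, 0 ≤ f s) (hf : Integrable f)
    (p : Fin (M + 2) → Fin (n + 2)) (hp : Function.Injective p) :
    (∫ z in (Set.univ.pi fun _ : Fin (n + 1) => Set.Icc (0:ℝ) t),
        ∏ l : Fin (M + 1), f (zc z (p l.castSucc : ℕ) - zc z (p l.succ : ℕ)))
      ≤ (∫ s, f s) ^ (M + 1) * t ^ (n - M)
    ∧ (∫ z in simplex (n + 1) t,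
        ∏ l : Fin (M + 1), f (zc z (p l.castSucc : ℕ) - zc z (p l.succ : ℕ)))
      ≤ (∫ s, f s) ^ (M + 1) * t ^ (n - M) := by
  classical
  obtain ⟨g, hgmeas, hfg⟩ : ∃ g : ℝ → ℝ, Measurable g ∧ f =ᵐ[volume] g :=
    ⟨hf.1.mk f, hf.1.measurable_mk, hf.1.ae_eq_mk⟩
  obtain ⟨N, hNsub, hNmeas, hNnull⟩ :=
    exists_measurable_superset_of_null (ae_iff.mp hfg)
  set φ : ℝ → ENNReal := fun x => if x ∈ N then ⊤ else ENNReal.ofReal (g x) with hφdef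
  have hφm : Measurable φ := Measurable.ite hNmeas measurable_const hgmeas.ennreal_ofReal
  have hφ_ge : ∀ x, ENNReal.ofReal (f x) ≤ φ x := by
    intro x
    by_cases hx : x ∈ N
    · simp [hφdef, hx]
    · have hfx : f x = g x := by
        by_contra h
        exact hx (hNsub h)
      simp [hφdef, hx, hfx, le_refl]
  have hφA : ∫⁻ s, φ s = ENNReal.ofReal (∫ s, f s) := by
    have h2 : ∀ᵐ x ∂(volume : Measure ℝ), x ∉ N := ae_iff.mpr (by simpa using hNnull)
    have h1 : φ =ᵐ[volume] fun x => ENNReal.ofReal (f x) := by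
      filter_upwards [hfg, h2] with x hx1 hx2
      simp [hφdef, hx2, hx1]
    rw [lintegral_congr_ae h1,
      ← ofReal_integral_eq_lintegral_ofReal hf (Filter.Eventually.of_forall hf0)]
  set q : Fin (M + 2) → ℕ := fun l => (p l : ℕ) with hqdef
  have hq : Function.Injective q := fun a b h => hp (Fin.val_inj.mp h)
  have hqle : ∀ l, q l ≤ n + 1 := fun l => by
    simp only [hqdef]
    have := (p l).isLt
    omega
  have hkey := key_lintegral ht φ hφm M hM q hq hqle
  rw [hφA] at hkey
  set B : ENNReal := ENNReal.ofReal (∫ s, f s) ^ (M + 1) * ENNReal.ofReal t ^ (n - M) with hBdef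
  have hBtop : B ≠ ⊤ :=
    ENNReal.mul_ne_top (ENNReal.pow_ne_top ENNReal.ofReal_ne_top)
      (ENNReal.pow_ne_top ENNReal.ofReal_ne_top)
  have hBto : B.toReal = (∫ s, f s) ^ (M + 1) * t ^ (n - M) := by
    rw [hBdef, ENNReal.toReal_mul, ENNReal.toReal_pow, ENNReal.toReal_pow,
      ENNReal.toReal_ofReal (integral_nonneg hf0), ENNReal.toReal_ofReal ht.le]
  set F : (Fin (n + 1) → ℝ) → ℝ :=
    fun z => ∏ l : Fin (M + 1), f (zc z (p l.castSucc : ℕ) - zc z (p l.succ : ℕ)) with hFdef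
  have hF0 : ∀ z, 0 ≤ F z := fun z => Finset.prod_nonneg fun l _ => hf0 _
  set φB : (Fin (n + 1) → ℝ) → ENNReal :=
    fun z => ∏ l : Fin (M + 1), φ (zc z (q l.castSucc) - zc z (q l.succ)) with hφBdef
  have hle : ∀ z, ENNReal.ofReal (F z) ≤ φB z := by
    intro z
    rw [hFdef, ENNReal.ofReal_prod_of_nonneg fun l _ => hf0 _]
    exact Finset.prod_le_prod' fun l _ => hφ_ge _
  have hcube : ∫⁻ z, φB z
      ∂((volume : Measure (Fin (n + 1) → ℝ)).restrict
          (Set.univ.pi fun _ => Set.Icc (0:ℝ) t)) ≤ B := by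
    rw [← restrict_cube]
    exact hkey
  constructor
  · exact hBto ▸ integral_le_of_lintegral_le _ F hF0 φB hle B hcube hBtop
  · have hsub : simplex (n + 1) t ⊆ Set.univ.pi fun _ : Fin (n + 1) => Set.Icc (0:ℝ) t :=
      fun z hz => Set.mem_univ_pi.mpr fun i => hz.2 i
    have hsimp : ∫⁻ z, φB z
        ∂((volume : Measure (Fin (n + 1) → ℝ)).restrict (simplex (n + 1) t)) ≤ B :=
      le_trans (lintegral_mono' (Measure.restrict_mono hsub le_rfl) le_rfl) hcube
    exact hBto ▸ integral_le_of_lintegral_le _ F hF0 φB hle B hsimp hBtop
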